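/- arXiv:2303.04895 — 2 statements merged into one kernel-verified Lean document; each statement's English description precedes it below -/
import Mathlib

section
/- Soundness of the morpho-logic sequent calculus: if the sequent φ ⊢ ψ is derivable in the sequent calculus described in the context, then for every model M = (X, N, ν) with N a topological neighborhood on X, ⟦φ⟧_M ⊆ ⟦ψ⟧_M. -/
/-- Modal formulas over a type `PV` of propositional variables. -/
inductive Formula (PV : Type) : Type
  | top : Formula PV
  | bot : Formula PV
  | var : PV → Formula PV
  | neg : Formula PV → Formula PV
  | and : Formula PV → Formula PV → Formula PV
  | or : Formula PV → Formula PV → Formula PV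
  | imp : Formula PV → Formula PV → Formula PV
  | box : Formula PV → Formula PV
  | dia : Formula PV → Formula PV

/-- A structuring neighborhood: each `N x` is a filter all of whose members contain `x`. -/
def IsStructuringNbhd {X : Type*} (N : X → Filter X) : Prop := ∀ x, ∀ A ∈ N x, x ∈ A

/-- A topological neighborhood. -/
def IsTopologicalNbhd {X : Type*} (N : X → Filter X) : Prop :=
  IsStructuringNbhd N ∧ ∀ x, ∀ A ∈ N x, ∃ B ∈ N x, ∀ y ∈ B, A ∈ N y

/-- Erosion by a structuring neighborhood. -/
def erosionN {X : Type*} (N : X → Filter X) (Y : Set X) : Set X := {x | Y ∈ N x}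

/-- Dilation by a structuring neighborhood. -/
def dilationN {X : Type*} (N : X → Filter X) (Y : Set X) : Set X :=
  {x | ∀ A ∈ N x, (A ∩ Y).Nonempty}

/-- Semantics of modal formulas in a model given by a neighborhood map `N` and
a valuation `ν`. -/
def sem {PV : Type} {X : Type*} (N : X → Filter X) (ν : PV → Set X) :
    Formula PV → Set X
  | .top => Set.univ
  | .bot => ∅
  | .var p => ν p
  | .neg φ => (sem N ν φ)ᶜ
  | .and φ ψ => sem N ν φ ∩ sem N ν ψ
  | .or φ ψ => sem N ν φ ∪ sem N ν ψ
  | .imp φ ψ => (sem N ν φ)ᶜ ∪ sem N ν ψ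
  | .box φ => erosionN N (sem N ν φ)
  | .dia φ => dilationN N (sem N ν φ)

/-- The sequent calculus of morpho-logic. `Deriv φ ψ` means the sequent
`φ ⊢ ψ` is derivable. -/
inductive Deriv {PV : Type} : Formula PV → Formula PV → Prop
  -- identity rule
  | id {φ} : Deriv φ φ
  -- preservation axioms
  | boxTop₁ : Deriv (.box .top) .top
  | boxTop₂ : Deriv .top (.box .top)
  | diaBot₁ : Deriv (.dia .bot) .bot
  | diaBot₂ : Deriv .bot (.dia .bot)
  -- duality axiom
  | boxNeg {φ} : Deriv (.box (.neg φ)) (.neg (.dia φ))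
  -- distributivity axioms
  | boxAnd₁ {φ ψ} : Deriv (.box (.and φ ψ)) (.and (.box φ) (.box ψ))
  | boxAnd₂ {φ ψ} : Deriv (.and (.box φ) (.box ψ)) (.box (.and φ ψ))
  | diaOr {φ ψ} : Deriv (.or (.dia φ) (.dia ψ)) (.dia (.or φ ψ))
  -- axiom K
  | axK {φ ψ} : Deriv (.box (.imp φ ψ)) (.imp (.box φ) (.box ψ))
  -- axiom T
  | axT₁ {φ} : Deriv (.box φ) φ
  | axT₂ {φ} : Deriv φ (.dia φ)
  -- axiom S4
  | axS4Box {φ} : Deriv (.box φ) (.box (.box φ))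
  | axS4Dia {φ} : Deriv (.dia (.dia φ)) (.dia φ)
  -- classical axiom
  | classical {φ} : Deriv (.neg (.neg φ)) φ
  -- inconsistency
  | exfalso {ψ} : Deriv .bot ψ
  -- tautology
  | taut {φ} : Deriv φ .top
  -- cut rule
  | cut {φ ψ χ} : Deriv φ ψ → Deriv ψ χ → Deriv φ χ
  -- rules for conjunction
  | andE₁ {φ ψ} : Deriv (.and φ ψ) φ
  | andE₂ {φ ψ} : Deriv (.and φ ψ) ψ
  | andIdem₁ {φ} : Deriv (.and φ φ) φ
  | andIdem₂ {φ} : Deriv φ (.and φ φ)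
  | andComm₁ {φ ψ} : Deriv (.and φ ψ) (.and ψ φ)
  | andComm₂ {φ ψ} : Deriv (.and ψ φ) (.and φ ψ)
  | andI {φ ψ χ} : Deriv φ ψ → Deriv φ χ → Deriv φ (.and ψ χ)
  -- rules for disjunction
  | orI₁ {φ ψ} : Deriv φ (.or φ ψ)
  | orI₂ {φ ψ} : Deriv ψ (.or φ ψ)
  | orComm₁ {φ ψ} : Deriv (.or φ ψ) (.or ψ φ)
  | orComm₂ {φ ψ} : Deriv (.or ψ φ) (.or φ ψ)
  | orE {φ ψ χ} : Deriv φ χ → Deriv ψ χ → Deriv (.or φ ψ) χ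
  | orInv₁ {φ ψ χ} : Deriv (.or φ ψ) χ → Deriv φ χ
  | orInv₂ {φ ψ χ} : Deriv (.or φ ψ) χ → Deriv ψ χ
  -- distributivity
  | distrib₁ {φ ψ χ} : Deriv (.and φ (.or ψ χ)) (.or (.and φ ψ) (.and φ χ))
  | distrib₂ {φ ψ χ} : Deriv (.or (.and φ ψ) (.and φ χ)) (.and φ (.or ψ χ))
  -- two-way rule for implication
  | impI {φ ψ χ} : Deriv (.and φ ψ) χ → Deriv φ (.imp ψ χ)
  | impE {φ ψ χ} : Deriv φ (.imp ψ χ) → Deriv (.and φ ψ) χ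
  -- rule for negation
  | negDef₁ {φ} : Deriv (.neg φ) (.imp φ .bot)
  | negDef₂ {φ} : Deriv (.imp φ .bot) (.neg φ)
  -- rules for modalities
  | boxMono {φ ψ} : Deriv φ ψ → Deriv (.box φ) (.box ψ)
  | diaMono {φ ψ} : Deriv φ ψ → Deriv (.dia φ) (.dia ψ)

/-- Soundness: a derivable sequent `φ ⊢ ψ` is valid in every model whose
neighborhood map is a topological neighborhood. -/
theorem soundness {PV : Type} [Countable PV] {φ ψ : Formula PV}
    (h : Deriv φ ψ) :
    ∀ (X : Type) (N : X → Filter X), IsTopologicalNbhd N →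
      ∀ ν : PV → Set X, sem N ν φ ⊆ sem N ν ψ := by
  induction h with
  | id => intro X N hN ν x hx; exact hx
  | boxTop₁ => intro X N hN ν x _; trivial
  | boxTop₂ => intro X N hN ν x _; exact Filter.univ_mem
  | diaBot₁ =>
      intro X N hN ν x hx
      rcases hx Set.univ Filter.univ_mem with ⟨y, -, hy⟩
      exact hy
  | diaBot₂ => intro X N hN ν x hx; exact hx.elim
  | boxNeg =>
      intro X N hN ν x hx hd
      rcases hd _ hx with ⟨y, hy1, hy2⟩
      exact hy1 hy2
  | boxAnd₁ =>
      intro X N hN ν x hx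
      exact ⟨Filter.mem_of_superset hx Set.inter_subset_left,
             Filter.mem_of_superset hx Set.inter_subset_right⟩
  | boxAnd₂ => intro X N hN ν x hx; exact Filter.inter_mem hx.1 hx.2
  | diaOr =>
      intro X N hN ν x hx A hA
      rcases hx with hx | hx
      · rcases hx A hA with ⟨y, hy1, hy2⟩; exact ⟨y, hy1, Or.inl hy2⟩
      · rcases hx A hA with ⟨y, hy1, hy2⟩; exact ⟨y, hy1, Or.inr hy2⟩
  | @axK φ ψ =>
      intro X N hN ν x hx
      by_cases hb : sem N ν φ ∈ N x
      · exact Or.inr (by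
          have := Filter.inter_mem hx hb
          exact Filter.mem_of_superset this (by
            rintro y ⟨(hy | hy), hy2⟩
            · exact (hy hy2).elim
            · exact hy))
      · exact Or.inl hb
  | axT₁ => intro X N hN ν x hx; exact hN.1 x _ hx
  | axT₂ =>
      intro X N hN ν x hx A hA
      exact ⟨x, hN.1 x _ hA, hx⟩
  | @axS4Box φ =>
      intro X N hN ν x hx
      rcases hN.2 x _ hx with ⟨B, hB, hB2⟩
      exact Filter.mem_of_superset hB hB2
  | @axS4Dia φ =>
      intro X N hN ν x hx A hA
      rcases hN.2 x A hA with ⟨B, hB, hB2⟩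
      rcases hx B hB with ⟨y, hy1, hy2⟩
      exact hy2 A (hB2 y hy1)
  | classical =>
      intro X N hN ν x hx
      exact not_not.mp hx
  | exfalso => intro X N hN ν x hx; exact hx.elim
  | taut => intro X N hN ν x _; trivial
  | cut h1 h2 ih1 ih2 =>
      intro X N hN ν
      exact (ih1 X N hN ν).trans (ih2 X N hN ν)
  | andE₁ => intro X N hN ν x hx; exact hx.1
  | andE₂ => intro X N hN ν x hx; exact hx.2
  | andIdem₁ => intro X N hN ν x hx; exact hx.1
  | andIdem₂ => intro X N hN ν x hx; exact ⟨hx, hx⟩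
  | andComm₁ => intro X N hN ν x hx; exact ⟨hx.2, hx.1⟩
  | andComm₂ => intro X N hN ν x hx; exact ⟨hx.2, hx.1⟩
  | andI h1 h2 ih1 ih2 =>
      intro X N hN ν x hx
      exact ⟨ih1 X N hN ν hx, ih2 X N hN ν hx⟩
  | orI₁ => intro X N hN ν x hx; exact Or.inl hx
  | orI₂ => intro X N hN ν x hx; exact Or.inr hx
  | orComm₁ => intro X N hN ν x hx; exact hx.symm
  | orComm₂ => intro X N hN ν x hx; exact hx.symm
  | orE h1 h2 ih1 ih2 =>
      intro X N hN ν x hx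
      rcases hx with hx | hx
      · exact ih1 X N hN ν hx
      · exact ih2 X N hN ν hx
  | orInv₁ h1 ih =>
      intro X N hN ν x hx
      exact ih X N hN ν (Or.inl hx)
  | orInv₂ h1 ih =>
      intro X N hN ν x hx
      exact ih X N hN ν (Or.inr hx)
  | distrib₁ =>
      intro X N hN ν x hx
      rcases hx with ⟨h1, h2 | h2⟩
      · exact Or.inl ⟨h1, h2⟩
      · exact Or.inr ⟨h1, h2⟩
  | distrib₂ =>
      intro X N hN ν x hx
      rcases hx with ⟨h1, h2⟩ | ⟨h1, h2⟩
      · exact ⟨h1, Or.inl h2⟩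
      · exact ⟨h1, Or.inr h2⟩
  | @impI φ ψ χ h1 ih =>
      intro X N hN ν x hx
      by_cases hy : x ∈ sem N ν ψ
      · exact Or.inr (ih X N hN ν ⟨hx, hy⟩)
      · exact Or.inl hy
  | impE h1 ih =>
      intro X N hN ν x hx
      rcases ih X N hN ν hx.1 with h | h
      · exact (h hx.2).elim
      · exact h
  | negDef₁ => intro X N hN ν x hx; exact Or.inl hx
  | negDef₂ =>
      intro X N hN ν x hx
      rcases hx with h | h
      · exact h
      · exact h.elim
  | boxMono h1 ih =>
      intro X N hN ν x hx
      exact Filter.mem_of_superset hx (ih X N hN ν)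
  | diaMono h1 ih =>
      intro X N hN ν x hx A hA
      rcases hx A hA with ⟨y, hy1, hy2⟩
      exact ⟨y, hy1, ih X N hN ν hy2⟩
end

section
/- The dilation-based belief revision operator satisfies the AGM postulates: let φ, ψ be modal formulas such that there exists k with ◇^k φ ∧ ψ consistent, let n be the least such k, and set φ ∘ ψ := ◇^n φ ∧ ψ. Then: (G1) φ ∘ ψ is consistent; (G2) Mod(φ ∘ ψ) ⊆ Mod(ψ); (G3) if φ ∧ ψ is consistent then φ ∘ ψ = φ ∧ ψ (i.e. n = 0); (G4) if φ ≡ φ' and ψ ≡ ψ', then the least k with ◇^k φ' ∧ ψ' consistent exists and Mod(φ ∘ ψ) = Mod(φ' ∘ ψ'); (G5) if (φ ∘ ψ) ∧ χ is consistent then the least k with ◇^k φ ∧ (ψ ∧ χ) consistent exists and Mod((φ ∘ ψ) ∧ χ) = Mod(φ ∘ (ψ ∧ χ)). -/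
/-- A model: a nonempty carrier type (in a fixed universe), a structuring
neighborhood on it, and a valuation. -/
structure MModel (PV : Type) where
  X : Type
  ne : Nonempty X
  N : X → Filter X
  hN : IsStructuringNbhd N
  ν : PV → Set X

/-- Semantics of a formula in a model. -/
def MModel.sem {PV : Type} (M : MModel PV) (φ : Formula PV) : Set M.X :=
  _root_.sem M.N M.ν φ

/-- Satisfaction: `M ⊨ φ` iff the semantics of `φ` is the whole carrier. -/
def MModel.Sat {PV : Type} (M : MModel PV) (φ : Formula PV) : Prop :=
  M.sem φ = Set.univ

/-- The class of models of a formula. -/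
def ModSet {PV : Type} (φ : Formula PV) : Set (MModel PV) := {M | M.Sat φ}

/-- Consistency: existence of a model. -/
def Consistent {PV : Type} (φ : Formula PV) : Prop := ∃ M : MModel PV, M.Sat φ

/-- Logical equivalence: same semantics in every model. -/
def FormulaEquiv {PV : Type} (φ φ' : Formula PV) : Prop :=
  ∀ M : MModel PV, M.sem φ = M.sem φ'

/-- `k` iterated applications of ◇. -/
def diaIter {PV : Type} : ℕ → Formula PV → Formula PV
  | 0, φ => φ
  | k + 1, φ => .dia (diaIter k φ)


lemma sat_and {PV : Type} (M : MModel PV) (a b : Formula PV) :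
    M.Sat (.and a b) ↔ M.Sat a ∧ M.Sat b := by
  simp only [MModel.Sat, MModel.sem, sem]
  constructor
  · intro h
    constructor <;> [exact Set.univ_subset_iff.mp (h ▸ Set.inter_subset_left);
      exact Set.univ_subset_iff.mp (h ▸ Set.inter_subset_right)]
  · rintro ⟨h1, h2⟩; rw [h1, h2, Set.univ_inter]

lemma sem_congr {PV : Type} {φ φ' : Formula PV} (h : FormulaEquiv φ φ') (k : ℕ)
    (M : MModel PV) : M.sem (diaIter k φ) = M.sem (diaIter k φ') := by
  induction k with
  | zero => exact h M
  | succ k ih =>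
    show dilationN _ _ = dilationN _ _
    rw [show _root_.sem M.N M.ν (diaIter k φ) = _root_.sem M.N M.ν (diaIter k φ') from ih]

/-- The dilation-based revision operator `φ ∘ ψ = ◇ⁿ φ ∧ ψ`, where `n` is the
least `k` such that `◇ᵏ φ ∧ ψ` is consistent, satisfies the AGM postulates
(G1)–(G5). -/
theorem revision_satisfies_AGM {PV : Type} [Countable PV] (φ ψ : Formula PV)
    (n : ℕ) (hn : Consistent (.and (diaIter n φ) ψ))
    (hmin : ∀ m < n, ¬ Consistent (.and (diaIter m φ) ψ)) :
    -- (G1) φ ∘ ψ is consistent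
    Consistent (.and (diaIter n φ) ψ) ∧
    -- (G2) Mod(φ ∘ ψ) ⊆ Mod(ψ)
    ModSet (.and (diaIter n φ) ψ) ⊆ ModSet ψ ∧
    -- (G3) if φ ∧ ψ is consistent then φ ∘ ψ = φ ∧ ψ (i.e. n = 0)
    (Consistent (.and φ ψ) →
      n = 0 ∧ Formula.and (diaIter n φ) ψ = Formula.and φ ψ) ∧
    -- (G4) syntax independence
    (∀ φ' ψ' : Formula PV, FormulaEquiv φ φ' → FormulaEquiv ψ ψ' →
      ∃ n' : ℕ, Consistent (.and (diaIter n' φ') ψ') ∧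
        (∀ m < n', ¬ Consistent (.and (diaIter m φ') ψ')) ∧
        ModSet (.and (diaIter n φ) ψ) = ModSet (.and (diaIter n' φ') ψ')) ∧
    -- (G5) if (φ ∘ ψ) ∧ χ is consistent then Mod((φ ∘ ψ) ∧ χ) = Mod(φ ∘ (ψ ∧ χ))
    (∀ χ : Formula PV, Consistent (.and (.and (diaIter n φ) ψ) χ) →
      ∃ m : ℕ, Consistent (.and (diaIter m φ) (.and ψ χ)) ∧
        (∀ j < m, ¬ Consistent (.and (diaIter j φ) (.and ψ χ))) ∧
        ModSet (.and (.and (diaIter n φ) ψ) χ) =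
          ModSet (.and (diaIter m φ) (.and ψ χ))) := by
  refine ⟨hn, ?_, ?_, ?_, ?_⟩
  · intro M hM
    exact ((sat_and M _ _).mp hM).2
  · intro hc
    have h0 : n = 0 := by
      by_contra h
      exact hmin 0 (Nat.pos_of_ne_zero h) hc
    exact ⟨h0, by rw [h0]; rfl⟩
  · intro φ' ψ' hφ hψ
    have key : ∀ k (M : MModel PV),
        M.Sat (.and (diaIter k φ) ψ) ↔ M.Sat (.and (diaIter k φ') ψ') := by
      intro k M
      rw [sat_and, sat_and]
      simp only [MModel.Sat]
      rw [sem_congr hφ k M, hψ M]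
    refine ⟨n, ?_, ?_, ?_⟩
    · obtain ⟨M, hM⟩ := hn; exact ⟨M, (key n M).mp hM⟩
    · intro m hm hc
      obtain ⟨M, hM⟩ := hc
      exact hmin m hm ⟨M, (key m M).mpr hM⟩
    · ext M; exact key n M
  · intro χ hc
    have key : ∀ k (M : MModel PV),
        M.Sat (.and (.and (diaIter k φ) ψ) χ) ↔ M.Sat (.and (diaIter k φ) (.and ψ χ)) := by
      intro k M
      rw [sat_and, sat_and, sat_and, sat_and, and_assoc]
    refine ⟨n, ?_, ?_, ?_⟩
    · obtain ⟨M, hM⟩ := hc; exact ⟨M, (key n M).mp hM⟩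
    · intro j hj hc'
      obtain ⟨M, hM⟩ := hc'
      have := (sat_and M _ _).mp hM
      exact hmin j hj ⟨M, (sat_and M _ _).mpr ⟨this.1, ((sat_and M _ _).mp this.2).1⟩⟩
    · ext M; exact key n M
end
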